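/- Let X = (V, E, rt, V_\bullet) be a 2-colored rooted tree with rt \in V_\bullet and k an essentially positive index on X. Suppose V = V_1 \sqcup V_2, E = E_1 \sqcup E_2 \sqcup \{f\}, V_\bullet = V_{1,\bullet} \sqcup V_{2,\bullet}, with rt \in V_{1,\bullet}, and there is an isomorphism F : (V_1, E_1, rt) \to (V_2, E_2, F(rt)) of rooted trees with F(V_{1,\bullet}) = V_{2,\bullet}, such that k_f is odd and k_{\{a,b\}} = k_{\{F(a),F(b)\}} for every edge \{a,b\} \in E_1. Then \Phi(X, k) := \sum_{v \in V_\bullet} (-1)^{k_{P(rt,v)}} (X_v, k) = 0 in 2CRT, where X_v denotes the same tree re-rooted at v and k_{P(rt,v)} = \sum_{e \in P(rt,v)} k_e. -/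

import Mathlib

/-! Gluing `F` on `V₁` with `F⁻¹` on `V₂` gives an involutive automorphism `σ` of the tree
which preserves colours and index and swaps the two ends of `f`. Re-rooting at `v` and at `σ v`
gives isomorphic generators, while modulo 2 the weight `k_{P(a,·)}` is additive along paths
(any walk computes it) and is carried along by `σ`, so
`k_{P(rt,σ v)} ≡ k_{P(rt,v)} + k_{P(u,σ u)} = k_{P(rt,v)} + k_f`, which is odd. Reindexing `Φ`
by `σ` therefore gives `Φ(X, k) = -Φ(X, k)`. -/

attribute [local instance] Classical.propDecidable

/-- A 2-colored rooted tree X = (V, E, rt, V_•): a finite tree (V, E) with a root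
rt ∈ V and a subset V_• ⊆ V containing all terminal (degree-1) vertices. -/
structure CRT : Type 1 where
  V : Type
  [fV : Fintype V]
  [dV : DecidableEq V]
  G : SimpleGraph V
  isTree : G.IsTree
  rt : V
  Vb : Finset V
  terminal_mem : ∀ v : V, (G.neighborSet v).ncard = 1 → v ∈ Vb

attribute [instance] CRT.fV CRT.dV

/-- The unique path between two vertices of a tree, as a walk. -/
noncomputable def tpath {V : Type} (G : SimpleGraph V) (h : G.IsTree) (a b : V) :
    G.Walk a b :=
  (((SimpleGraph.isTree_iff_existsUnique_path).mp h).2 a b).exists.choose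

/-- P(a,b): the list of edges of the path from a to b. -/
noncomputable def CRT.pEdges (A : CRT) (a b : A.V) : List (Sym2 A.V) :=
  (tpath A.G A.isTree a b).edges

/-- k_{P(a,b)} = ∑_{e ∈ P(a,b)} k_e. -/
noncomputable def CRT.kP (A : CRT) (k : Sym2 A.V → ℕ) (a b : A.V) : ℕ :=
  ((A.pEdges a b).map k).sum

/-- An index k on X is essentially positive if k_{P(v,v')} > 0 for all distinct
v, v' ∈ V_•. -/
def CRT.EssPos (A : CRT) (k : Sym2 A.V → ℕ) : Prop :=
  ∀ a ∈ A.Vb, ∀ b ∈ A.Vb, a ≠ b → 0 < A.kP k a b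

/-- The finite multiple harmonic sum ζ_M(X; k) attached to a 2-colored rooted tree:
∑_{(m_v) ∈ ℤ_{≥1}^{V_•}, Σ m_v = M} ∏_{e ∈ E} (∑_{v ∈ V_• : e ∈ P(rt,v)} m_v)^{-k_e}. -/
noncomputable def CRT.zetaM (A : CRT) (k : Sym2 A.V → ℕ) (M : ℕ) : ℚ :=
  ∑ m ∈ (A.Vb.pi fun _ => Finset.Icc 1 M).filter
      (fun m => (∑ v ∈ A.Vb.attach, m v.1 v.2) = M),
    ∏ e ∈ Finset.univ.filter (fun e : Sym2 A.V => e ∈ A.G.edgeSet),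
      ((∑ v ∈ A.Vb.attach.filter (fun v => e ∈ A.pEdges A.rt v.1),
          (m v.1 v.2 : ℚ))⁻¹) ^ k e

/-- Re-rooting X_v = (V, E, v, V_•). -/
noncomputable def CRT.reroot (A : CRT) (v : A.V) : CRT :=
  ⟨A.V, A.G, A.isTree, v, A.Vb, A.terminal_mem⟩

/-- A generator of 2CRT: a 2-colored rooted tree with rt ∈ V_• together with an
essentially positive index. -/
structure ICRT : Type 1 where
  X : CRT
  rootMem : X.rt ∈ X.Vb
  k : Sym2 X.V → ℕ
  essPos : X.EssPos k

/-- Isomorphism of pairs (X, k): a bijection of vertices preserving adjacency, the root,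
the set V_• and the index on edges (trees are non-planar, so pairs are identified up to
such isomorphisms). -/
def ICRT.Iso (A B : ICRT) : Prop :=
  ∃ f : A.X.V ≃ B.X.V,
    (∀ a b, A.X.G.Adj a b ↔ B.X.G.Adj (f a) (f b)) ∧
    f A.X.rt = B.X.rt ∧
    (∀ v, v ∈ A.X.Vb ↔ f v ∈ B.X.Vb) ∧
    (∀ a b, A.X.G.Adj a b → A.k s(a, b) = B.k s(f a, f b))

/-- The ℚ-vector space 2CRT: formal ℚ-linear combinations of pairs (X, k) up to
isomorphism. -/
noncomputable abbrev TwoCRT : Type 1 := (Quot ICRT.Iso) →₀ ℚ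

/-- Re-rooting a generator at v ∈ V_•. -/
noncomputable def ICRT.reroot (A : ICRT) (v : A.X.V) (hv : v ∈ A.X.Vb) : ICRT :=
  ⟨A.X.reroot v, hv, A.k, A.essPos⟩

/-- The symmetrization map on generators:
Φ(X, k) = ∑_{v ∈ V_•} (-1)^{k_{P(rt,v)}} (X_v, k) ∈ 2CRT. -/
noncomputable def Phi (A : ICRT) : TwoCRT :=
  ∑ v ∈ A.X.Vb.attach,
    ((-1 : ℚ) ^ A.X.kP A.k A.X.rt v.1) •
      Finsupp.single (Quot.mk ICRT.Iso (A.reroot v.1 v.2)) (1 : ℚ)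

namespace SimpleGraph

variable {V : Type} {G : SimpleGraph V} (hT : G.IsTree)

theorem tpath_isPath (a b : V) : (tpath G hT a b).IsPath :=
  ((isTree_iff_existsUnique_path.mp hT).2 a b).exists.choose_spec

theorem tpath_eq_of_isPath {a b : V} {p : G.Walk a b} (hp : p.IsPath) : tpath G hT a b = p :=
  congrArg Subtype.val
    ((hT.isAcyclic.subsingleton_path a b).elim ⟨_, tpath_isPath hT a b⟩ ⟨p, hp⟩)

theorem tpath_of_adj {a b : V} (h : G.Adj a b) : tpath G hT a b = Walk.cons h Walk.nil :=
  tpath_eq_of_isPath hT (Walk.IsPath.nil.cons (by simpa using h.ne))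

theorem tpath_cons_or_cons {a a' : V} (h : G.Adj a a') (b : V) :
    tpath G hT a b = Walk.cons h (tpath G hT a' b) ∨
      tpath G hT a' b = Walk.cons h.symm (tpath G hT a b) := by
  by_cases ha : a ∈ (tpath G hT a' b).support
  · right
    have hp := tpath_isPath hT a' b
    have htake : (tpath G hT a' b).takeUntil a ha = Walk.cons h.symm Walk.nil :=
      (tpath_eq_of_isPath hT (hp.takeUntil ha)).symm.trans (tpath_of_adj hT h.symm)
    have hdrop : (tpath G hT a' b).dropUntil a ha = tpath G hT a b :=
      (tpath_eq_of_isPath hT (hp.dropUntil ha)).symm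
    rw [← Walk.take_spec _ ha, htake, hdrop, Walk.cons_append, Walk.nil_append]
  · exact Or.inl (tpath_eq_of_isPath hT ((tpath_isPath hT a' b).cons ha))

theorem edges_sum_mod_two_eq_tpath (k : Sym2 V → ℕ) {a b : V} (p : G.Walk a b) :
    (((p.edges.map k).sum : ℕ) : ZMod 2) = (((tpath G hT a b).edges.map k).sum : ℕ) := by
  induction p with
  | nil => rw [tpath_eq_of_isPath hT Walk.IsPath.nil]
  | @cons a a' b h p ih =>
    rcases tpath_cons_or_cons hT h b with hab | hab
    · simp [hab, ih]
    · have h2 : ((k s(a, a') : ℕ) : ZMod 2) + k s(a, a') = 0 := CharTwo.add_self_eq_zero _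
      simp only [Walk.edges_cons, List.map_cons, List.sum_cons, Nat.cast_add, ih, hab,
        Sym2.eq_swap (a := a')]
      rw [← add_assoc, h2, zero_add]

theorem tpath_map_iso (σ : G ≃g G) (a b : V) :
    (tpath G hT a b).map σ.toHom = tpath G hT (σ a) (σ b) :=
  (tpath_eq_of_isPath hT ((tpath_isPath hT a b).map σ.injective)).symm

end SimpleGraph

open SimpleGraph

namespace CRT

variable (X : CRT) (k : Sym2 X.V → ℕ)

theorem kP_add_kP_mod_two (a b c : X.V) :
    ((X.kP k a b : ℕ) : ZMod 2) + X.kP k b c = X.kP k a c := by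
  have h := edges_sum_mod_two_eq_tpath X.isTree k
    ((tpath X.G X.isTree a b).append (tpath X.G X.isTree b c))
  simp only [Walk.edges_append, List.map_append, List.sum_append, Nat.cast_add] at h
  exact h

theorem kP_of_adj {a b : X.V} (h : X.G.Adj a b) : X.kP k a b = k s(a, b) := by
  simp [kP, pEdges, tpath_of_adj X.isTree h]

variable {X k}

theorem kP_map_iso {σ : X.G ≃g X.G} (hk : ∀ a b, X.G.Adj a b → k s(σ a, σ b) = k s(a, b))
    (a b : X.V) : X.kP k (σ a) (σ b) = X.kP k a b := by
  rw [kP, pEdges, ← tpath_map_iso, Walk.edges_map, List.map_map, kP, pEdges]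
  congr 1
  refine List.map_congr_left fun e he => ?_
  induction e with
  | h x y => exact hk x y (Walk.adj_of_mem_edges _ he)

theorem kP_apply_mod_two {σ : X.G ≃g X.G} (hk : ∀ a b, X.G.Adj a b → k s(σ a, σ b) = k s(a, b))
    (r u v : X.V) :
    ((X.kP k r (σ v) : ℕ) : ZMod 2) = X.kP k r v + X.kP k u (σ u) := by
  have h1 := X.kP_add_kP_mod_two k r u (σ u)
  have h2 := X.kP_add_kP_mod_two k r (σ u) (σ v)
  have h3 := X.kP_add_kP_mod_two k r u v
  rw [kP_map_iso hk] at h2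
  linear_combination h3 - h1 - h2

end CRT

theorem neg_one_pow_eq_of_natCast_eq {R : Type*} [Monoid R] [HasDistribNeg R] {m n : ℕ}
    (h : (m : ZMod 2) = n) : (-1 : R) ^ m = (-1) ^ n :=
  neg_one_pow_congr (by rw [← ZMod.natCast_eq_zero_iff_even, ← ZMod.natCast_eq_zero_iff_even, h])

theorem CRT.neg_one_pow_kP_apply {X : CRT} {k : Sym2 X.V → ℕ} {σ : X.G ≃g X.G}
    (hk : ∀ a b, X.G.Adj a b → k s(σ a, σ b) = k s(a, b)) {u : X.V} (hu : X.G.Adj u (σ u))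
    (hodd : Odd (k s(u, σ u))) (r v : X.V) :
    (-1 : ℚ) ^ X.kP k r (σ v) = -(-1) ^ X.kP k r v := by
  have h := X.kP_apply_mod_two hk r u v
  rw [X.kP_of_adj k hu, ← Nat.cast_add] at h
  rw [neg_one_pow_eq_of_natCast_eq h, pow_add, hodd.neg_one_pow, mul_neg_one]

theorem Phi_eq_zero_of_iso (A : ICRT) (σ : A.X.G ≃g A.X.G)
    (hVb : ∀ v, v ∈ A.X.Vb ↔ σ v ∈ A.X.Vb)
    (hk : ∀ a b, A.X.G.Adj a b → A.k s(σ a, σ b) = A.k s(a, b))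
    (hsign : ∀ v, (-1 : ℚ) ^ A.X.kP A.k A.X.rt (σ v) = -(-1) ^ A.X.kP A.k A.X.rt v) :
    Phi A = 0 := by
  have hreroot (v : A.X.V) (hv : v ∈ A.X.Vb) :
      Quot.mk ICRT.Iso (A.reroot (σ v) ((hVb v).mp hv)) = Quot.mk ICRT.Iso (A.reroot v hv) :=
    (Quot.sound ⟨σ.toEquiv, fun _ _ => σ.map_adj_iff.symm, rfl, hVb,
      fun a b h => (hk a b h).symm⟩).symm
  refine self_eq_neg.mp ?_
  calc Phi A = ∑ v ∈ A.X.Vb.attach, -(((-1 : ℚ) ^ A.X.kP A.k A.X.rt v.1) •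
        Finsupp.single (Quot.mk ICRT.Iso (A.reroot v.1 v.2)) (1 : ℚ)) :=
      Finset.sum_equiv (σ.toEquiv.subtypeEquiv hVb) (by simp) fun v _ => by
        simp [hsign, hreroot]
    _ = -Phi A := Finset.sum_neg_distrib _

namespace Set.BijOn

open Function

variable {α : Type*} {s : Set α} {F : α → α}

theorem adj_cases {G : SimpleGraph α} {u : α} (hF : BijOn F s sᶜ)
    (hcross : ∀ a b, G.Adj a b → s(a, b) ≠ s(u, F u) → (a ∈ s ∧ b ∈ s) ∨ (a ∈ sᶜ ∧ b ∈ sᶜ))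
    {a b : α} (h : G.Adj a b) :
    s(a, b) = s(u, F u) ∨ (a ∈ s ∧ b ∈ s) ∨ ∃ a' ∈ s, ∃ b' ∈ s, a = F a' ∧ b = F b' := by
  by_cases he : s(a, b) = s(u, F u)
  · exact Or.inl he
  rcases hcross a b h he with hab | ⟨ha, hb⟩
  · exact Or.inr (Or.inl hab)
  · obtain ⟨a', ha', rfl⟩ := hF.surjOn ha
    obtain ⟨b', hb', rfl⟩ := hF.surjOn hb
    exact Or.inr (Or.inr ⟨a', ha', b', hb', rfl, rfl⟩)

variable [Nonempty α]

theorem piecewise_invFunOn_image (hF : BijOn F s sᶜ) {a : α} (ha : a ∈ s) :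
    s.piecewise F (invFunOn F s) (F a) = a := by
  rw [piecewise_eq_of_notMem _ _ _ (hF.mapsTo ha), hF.invOn_invFunOn.1 ha]

theorem involutive_piecewise_invFunOn (hF : BijOn F s sᶜ) :
    Involutive (s.piecewise F (invFunOn F s)) := by
  intro a
  by_cases ha : a ∈ s
  · rw [piecewise_eq_of_mem _ _ _ ha, hF.piecewise_invFunOn_image ha]
  · obtain ⟨a', ha', rfl⟩ := hF.surjOn ha
    rw [hF.piecewise_invFunOn_image ha', piecewise_eq_of_mem _ _ _ ha']

noncomputable def swapPerm (hF : BijOn F s sᶜ) : Equiv.Perm α :=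
  hF.involutive_piecewise_invFunOn.toPerm

variable (hF : BijOn F s sᶜ)

theorem swapPerm_apply_of_mem {a : α} (ha : a ∈ s) : hF.swapPerm a = F a :=
  piecewise_eq_of_mem _ _ _ ha

theorem swapPerm_apply_image {a : α} (ha : a ∈ s) : hF.swapPerm (F a) = a :=
  hF.piecewise_invFunOn_image ha

theorem swapPerm_swapPerm (a : α) : hF.swapPerm (hF.swapPerm a) = a :=
  hF.involutive_piecewise_invFunOn a

theorem mem_iff_swapPerm_mem {t : Set α} (ht : ∀ a ∈ s, a ∈ t ↔ F a ∈ t) (a : α) :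
    a ∈ t ↔ hF.swapPerm a ∈ t := by
  by_cases ha : a ∈ s
  · rw [hF.swapPerm_apply_of_mem ha, ht a ha]
  · obtain ⟨a', ha', rfl⟩ := hF.surjOn ha
    rw [hF.swapPerm_apply_image ha', ht a' ha']

variable {G : SimpleGraph α} {u : α}

theorem adj_swapPerm (hu : u ∈ s)
    (hcross : ∀ a b, G.Adj a b → s(a, b) ≠ s(u, F u) → (a ∈ s ∧ b ∈ s) ∨ (a ∈ sᶜ ∧ b ∈ sᶜ))
    (hFadj : ∀ a ∈ s, ∀ b ∈ s, G.Adj a b ↔ G.Adj (F a) (F b))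
    (huF : G.Adj u (F u)) {a b : α} (h : G.Adj a b) :
    G.Adj (hF.swapPerm a) (hF.swapPerm b) := by
  rcases hF.adj_cases hcross h with he | ⟨ha, hb⟩ | ⟨a', ha', b', hb', rfl, rfl⟩
  · rcases Sym2.eq_iff.mp he with ⟨rfl, rfl⟩ | ⟨rfl, rfl⟩
    · rw [hF.swapPerm_apply_of_mem hu, hF.swapPerm_apply_image hu]
      exact huF.symm
    · rw [hF.swapPerm_apply_of_mem hu, hF.swapPerm_apply_image hu]
      exact huF
  · rw [hF.swapPerm_apply_of_mem ha, hF.swapPerm_apply_of_mem hb]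
    exact (hFadj a ha b hb).mp h
  · rw [hF.swapPerm_apply_image ha', hF.swapPerm_apply_image hb']
    exact (hFadj a' ha' b' hb').mpr h

theorem adj_swapPerm_iff (hu : u ∈ s)
    (hcross : ∀ a b, G.Adj a b → s(a, b) ≠ s(u, F u) → (a ∈ s ∧ b ∈ s) ∨ (a ∈ sᶜ ∧ b ∈ sᶜ))
    (hFadj : ∀ a ∈ s, ∀ b ∈ s, G.Adj a b ↔ G.Adj (F a) (F b))
    (huF : G.Adj u (F u)) {a b : α} :
    G.Adj (hF.swapPerm a) (hF.swapPerm b) ↔ G.Adj a b := by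
  refine ⟨fun h => ?_, hF.adj_swapPerm hu hcross hFadj huF⟩
  simpa only [swapPerm_swapPerm] using hF.adj_swapPerm hu hcross hFadj huF h

theorem apply_swapPerm_sym2 (hu : u ∈ s)
    (hcross : ∀ a b, G.Adj a b → s(a, b) ≠ s(u, F u) → (a ∈ s ∧ b ∈ s) ∨ (a ∈ sᶜ ∧ b ∈ sᶜ))
    (hFadj : ∀ a ∈ s, ∀ b ∈ s, G.Adj a b ↔ G.Adj (F a) (F b))
    {β : Type*} {k : Sym2 α → β}
    (hFk : ∀ a ∈ s, ∀ b ∈ s, G.Adj a b → k s(a, b) = k s(F a, F b)) {a b : α}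
    (h : G.Adj a b) : k s(hF.swapPerm a, hF.swapPerm b) = k s(a, b) := by
  rcases hF.adj_cases hcross h with he | ⟨ha, hb⟩ | ⟨a', ha', b', hb', rfl, rfl⟩
  · rcases Sym2.eq_iff.mp he with ⟨rfl, rfl⟩ | ⟨rfl, rfl⟩ <;>
      rw [hF.swapPerm_apply_of_mem hu, hF.swapPerm_apply_image hu, Sym2.eq_swap]
  · rw [hF.swapPerm_apply_of_mem ha, hF.swapPerm_apply_of_mem hb]
    exact (hFk a ha b hb h).symm
  · rw [hF.swapPerm_apply_image ha', hF.swapPerm_apply_image hb']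
    exact hFk a' ha' b' hb' ((hFadj a' ha' b' hb').mpr h)

end Set.BijOn

theorem stmt11_general (A : ICRT) (V1 V2 : Set A.X.V) (u w : A.X.V) (F : A.X.V → A.X.V)
    (hdisj : Disjoint V1 V2) (hunion : V1 ∪ V2 = Set.univ)
    (huV : u ∈ V1)
    (hadj : A.X.G.Adj u w)
    (hcross : ∀ a b, A.X.G.Adj a b → s(a, b) ≠ s(u, w) →
      ((a ∈ V1 ∧ b ∈ V1) ∨ (a ∈ V2 ∧ b ∈ V2)))
    (hFmaps : ∀ v ∈ V1, F v ∈ V2)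
    (hFbij : ∀ y ∈ V2, ∃! v, v ∈ V1 ∧ F v = y)
    (hFadj : ∀ a ∈ V1, ∀ b ∈ V1, (A.X.G.Adj a b ↔ A.X.G.Adj (F a) (F b)))
    (hFVb : ∀ v ∈ V1, (v ∈ A.X.Vb ↔ F v ∈ A.X.Vb))
    (hFk : ∀ a ∈ V1, ∀ b ∈ V1, A.X.G.Adj a b → A.k s(a, b) = A.k s(F a, F b))
    (hodd : Odd (A.k s(u, w)))
    (hwFu : w = F u) :
    Phi A = 0 := by
  subst hwFu
  obtain rfl : V2 = V1ᶜ := (IsCompl.compl_eq ⟨hdisj, codisjoint_iff.mpr hunion⟩).symm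
  have hF : Set.BijOn F V1 V1ᶜ :=
    ⟨hFmaps, fun a ha b hb hab => (hFbij (F a) (hFmaps a ha)).unique ⟨ha, rfl⟩ ⟨hb, hab.symm⟩,
      fun y hy => (hFbij y hy).exists⟩
  have : Nonempty A.X.V := ⟨u⟩
  let σ : A.X.G ≃g A.X.G := ⟨hF.swapPerm, hF.adj_swapPerm_iff huV hcross hFadj hadj⟩
  have hk : ∀ a b, A.X.G.Adj a b → A.k s(σ a, σ b) = A.k s(a, b) :=
    fun _ _ => hF.apply_swapPerm_sym2 huV hcross hFadj hFk
  have hσu : σ u = F u := hF.swapPerm_apply_of_mem huV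
  refine Phi_eq_zero_of_iso A σ (hF.mem_iff_swapPerm_mem (t := A.X.Vb) hFVb) hk ?_
  exact CRT.neg_one_pow_kP_apply hk (u := u) (hσu ▸ hadj) (hσu ▸ hodd) A.X.rt

/-- if X decomposes as two copies of a rooted tree (V₁,E₁,rt) and
(V₂,E₂,F(rt)), exchanged by an isomorphism F preserving colors and index entries, joined
by the single edge f = {u, F(u)} whose index entry k_f is odd, then
Φ(X,k) = ∑_{v ∈ V_•} (-1)^{k_{P(rt,v)}} (X_v, k) = 0 in 2CRT. -/
theorem stmt11 (A : ICRT) (V1 V2 : Set A.X.V) (u w : A.X.V) (F : A.X.V → A.X.V)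
    (hdisj : Disjoint V1 V2) (hunion : V1 ∪ V2 = Set.univ)
    (huV : u ∈ V1) (hwV : w ∈ V2)
    (hadj : A.X.G.Adj u w)
    (hcross : ∀ a b, A.X.G.Adj a b → s(a, b) ≠ s(u, w) →
      ((a ∈ V1 ∧ b ∈ V1) ∨ (a ∈ V2 ∧ b ∈ V2)))
    (hrt : A.X.rt ∈ V1)
    (hFmaps : ∀ v ∈ V1, F v ∈ V2)
    (hFbij : ∀ y ∈ V2, ∃! v, v ∈ V1 ∧ F v = y)
    (hFadj : ∀ a ∈ V1, ∀ b ∈ V1, (A.X.G.Adj a b ↔ A.X.G.Adj (F a) (F b)))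
    (hFVb : ∀ v ∈ V1, (v ∈ A.X.Vb ↔ F v ∈ A.X.Vb))
    (hFk : ∀ a ∈ V1, ∀ b ∈ V1, A.X.G.Adj a b → A.k s(a, b) = A.k s(F a, F b))
    (hodd : Odd (A.k s(u, w)))
    (hwFu : w = F u) :
    Phi A = 0 :=
  stmt11_general A V1 V2 u w F hdisj hunion huV hadj hcross hFmaps hFbij hFadj hFVb hFk hodd hwFu
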